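/- arXiv:2512.01227 — 7 statements merged into one kernel-verified Lean document; each statement's English description precedes it below -/
import Mathlib

section
/- For every n^d × n^d matrix M and every κ ⊆ [d], rank(M^{⊤_κ}) ≤ n^{2·min{|κ|, d−|κ|}} · rank(M). -/
/-!
Group the rows and columns of `M^{⊤_κ}` by their restrictions `a`, `b` to `κ`. On the block
`(a, b)` the partial transpose agrees with the submatrix of `M` whose rows are overwritten by `b`
and whose columns by `a` on `κ`, so `M^{⊤_κ}` is a sum of `n^{2|κ|}` matrices of rank at most
`rank M`. Since `M^{⊤_{κᶜ}}` is the transpose of `M^{⊤_κ}`, the bound also holds with `d - |κ|`.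
-/

open Matrix BigOperators

/-- The `κ`-partial transpose of an `n^d × n^d` matrix (indexed by tuples in `[n]^d`). -/
def ptrans {F : Type*} [Field F] {n d : ℕ} (κ : Finset (Fin d))
    (M : Matrix (Fin d → Fin n) (Fin d → Fin n) F) :
    Matrix (Fin d → Fin n) (Fin d → Fin n) F :=
  fun i j => M (fun k => if k ∈ κ then j k else i k) (fun k => if k ∈ κ then i k else j k)

namespace Matrix

variable {F : Type*} [Field F] {m n m' n' β γ : Type*} [Fintype n]

theorem rank_add_le (A B : Matrix m n F) : (A + B).rank ≤ A.rank + B.rank := by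
  unfold rank
  rw [mulVecLin_add]
  exact (Submodule.finrank_mono (LinearMap.range_add_le _ _)).trans
    (Submodule.finrank_add_le_finrank_add_finrank _ _)

theorem rank_sum_le {ι : Type*} (s : Finset ι) (A : ι → Matrix m n F) :
    (∑ x ∈ s, A x).rank ≤ ∑ x ∈ s, (A x).rank :=
  Finset.le_sum_of_subadditive (fun B : Matrix m n F => B.rank) rank_zero.le rank_add_le s A

theorem rank_le_card_mul_card_mul_rank [Fintype m'] [Fintype n'] [Fintype β] [Fintype γ]
    (M : Matrix m n F) (N : Matrix m' n' F) (p : m' → β) (q : n' → γ)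
    (r : γ → m' → m) (s : β → n' → n) (hN : ∀ i j, N i j = M (r (q j) i) (s (p i) j)) :
    N.rank ≤ Fintype.card β * Fintype.card γ * M.rank := by
  classical
  have hsum : N = ∑ bc : β × γ, diagonal (fun i => if p i = bc.1 then (1 : F) else 0) *
      M.submatrix (r bc.2) (s bc.1) * diagonal (fun j => if q j = bc.2 then (1 : F) else 0) := by
    ext i j
    rw [sum_apply, Finset.sum_eq_single (p i, q j)]
    · simp [hN]
    · rintro ⟨b, c⟩ - hbc
      by_cases hb : p i = b
      · have hc : q j ≠ c := fun hc => hbc (by rw [hb, hc])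
        simp [hc]
      · simp [hb]
    · simp
  calc N.rank ≤ ∑ bc : β × γ, (M.submatrix (r bc.2) (s bc.1)).rank := by
        rw [hsum]
        exact (rank_sum_le _ _).trans
          (Finset.sum_le_sum fun _ _ => (rank_mul_le_left _ _).trans (rank_mul_le_right _ _))
    _ ≤ ∑ _bc : β × γ, M.rank := Finset.sum_le_sum fun _ _ => rank_submatrix_le _ _ _
    _ = Fintype.card β * Fintype.card γ * M.rank := by simp

end Matrix

section PartialTranspose

variable {F : Type*} [Field F] {n d : ℕ}

theorem ptrans_apply (κ : Finset (Fin d)) (M : Matrix (Fin d → Fin n) (Fin d → Fin n) F)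
    (i j : Fin d → Fin n) :
    ptrans κ M i j =
      M (Function.updateFinset i κ (κ.restrict j)) (Function.updateFinset j κ (κ.restrict i)) := by
  simp only [ptrans, Function.updateFinset_def, Finset.restrict, dite_eq_ite]

theorem ptrans_compl (κ : Finset (Fin d)) (M : Matrix (Fin d → Fin n) (Fin d → Fin n) F) :
    ptrans κᶜ M = (ptrans κ M)ᵀ := by
  ext i j
  simp only [ptrans, transpose_apply, Finset.mem_compl, ite_not]

theorem rank_ptrans_le (κ : Finset (Fin d)) (M : Matrix (Fin d → Fin n) (Fin d → Fin n) F) :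
    (ptrans κ M).rank ≤ n ^ (2 * κ.card) * M.rank := by
  have h := rank_le_card_mul_card_mul_rank M (ptrans κ M) κ.restrict κ.restrict
    (fun c i => Function.updateFinset i κ c) (fun b j => Function.updateFinset j κ b)
    (ptrans_apply κ M)
  simpa [two_mul, pow_add] using h

end PartialTranspose

/-- `rank(M^{⊤_κ}) ≤ n^{2·min{|κ|, d−|κ|}} · rank(M)`. -/
theorem stmt3 {F : Type*} [Field F] {n d : ℕ}
    (M : Matrix (Fin d → Fin n) (Fin d → Fin n) F) (κ : Finset (Fin d)) :
    (ptrans κ M).rank ≤ n ^ (2 * min κ.card (d - κ.card)) * M.rank := by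
  rcases min_cases κ.card (d - κ.card) with ⟨h, -⟩ | ⟨h, -⟩ <;> rw [h]
  · exact rank_ptrans_le κ M
  · have hcard : κᶜ.card = d - κ.card := by rw [Finset.card_compl, Fintype.card_fin]
    rw [← hcard, ← rank_transpose, ← ptrans_compl]
    exact rank_ptrans_le κᶜ M
end

section
/- Let P = B_1 ⊠ ⋯ ⊠ B_d be a Kronecker product of n × n matrices and M an arbitrary n^d × n^d matrix. Then for every κ ⊆ [d], (PM)^{⊤_κ} = L · M^{⊤_κ} · R, where L is the Kronecker product over k ∈ [d] of I_n if k ∈ κ and B_k otherwise, and R is the Kronecker product over k ∈ [d] of B_k^T if k ∈ κ and I_n otherwise. -/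
open Matrix BigOperators

/-- The Kronecker product `B_1 ⊠ ⋯ ⊠ B_d` of `d` matrices of size `n × n`,
written as a matrix indexed by tuples in `[n]^d`. -/
def kron {F : Type*} [Field F] {n d : ℕ} (B : Fin d → Matrix (Fin n) (Fin n) F) :
    Matrix (Fin d → Fin n) (Fin d → Fin n) F :=
  fun i j => ∏ k, B k (i k) (j k)
/-- For `P = B_1 ⊠ ⋯ ⊠ B_d` and any `M`, `(PM)^{⊤_κ} = L · M^{⊤_κ} · R`, where `L` is the
Kronecker product of `I_n` (for `k ∈ κ`) and `B_k` (otherwise), and `R` is the Kronecker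
product of `B_kᵀ` (for `k ∈ κ`) and `I_n` (otherwise). -/
theorem stmt4 {F : Type*} [Field F] {n d : ℕ} (B : Fin d → Matrix (Fin n) (Fin n) F)
    (M : Matrix (Fin d → Fin n) (Fin d → Fin n) F) (κ : Finset (Fin d)) :
    ptrans κ (kron B * M) =
      kron (fun k => if k ∈ κ then (1 : Matrix (Fin n) (Fin n) F) else B k) *
        ptrans κ M *
        kron (fun k => if k ∈ κ then (B k)ᵀ else (1 : Matrix (Fin n) (Fin n) F)) := by
  classical
  ext i j
  set L := kron (fun k => if k ∈ κ then (1 : Matrix (Fin n) (Fin n) F) else B k) with hL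
  set R := kron (fun k => if k ∈ κ then (B k)ᵀ else (1 : Matrix (Fin n) (Fin n) F)) with hR
  set g : (Fin d → Fin n) × (Fin d → Fin n) → F :=
    fun p => L i p.1 * ptrans κ M p.1 p.2 * R p.2 j with hg
  set φ : (Fin d → Fin n) → (Fin d → Fin n) × (Fin d → Fin n) :=
    fun x => (fun k => if k ∈ κ then i k else x k, fun k => if k ∈ κ then x k else j k) with hφ
  have hinj : Function.Injective φ := by
    intro a b hab
    funext k
    by_cases hk : k ∈ κ
    · have := congrFun (congrArg Prod.snd hab) k
      simpa [hφ, hk] using this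
    · have := congrFun (congrArg Prod.fst hab) k
      simpa [hφ, hk] using this
  have hzero : ∀ p ∈ (Finset.univ : Finset ((Fin d → Fin n) × (Fin d → Fin n))),
      p ∉ Finset.image φ Finset.univ → g p = 0 := by
    intro p _ hp
    have hnot : ¬ ((∀ k ∈ κ, p.1 k = i k) ∧ (∀ k, k ∉ κ → p.2 k = j k)) := by
      rintro ⟨h1, h2⟩
      apply hp
      refine Finset.mem_image.2 ⟨fun k => if k ∈ κ then p.2 k else p.1 k, Finset.mem_univ _, ?_⟩
      refine Prod.ext (funext fun k => ?_) (funext fun k => ?_) <;> by_cases hk : k ∈ κ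
      · simp [hφ, hk, h1 k hk]
      · simp [hφ, hk]
      · simp [hφ, hk]
      · simp [hφ, hk, h2 k hk]
    push_neg at hnot
    rcases Classical.em (∀ k ∈ κ, p.1 k = i k) with hA | hA
    · obtain ⟨k, hk, hne⟩ := hnot hA
      have : R p.2 j = 0 := by
        rw [hR, kron]
        apply Finset.prod_eq_zero (Finset.mem_univ k)
        simp [hk, Matrix.one_apply, hne]
      simp [hg, this]
    · push_neg at hA
      obtain ⟨k, hk, hne⟩ := hA
      have : L i p.1 = 0 := by
        rw [hL, kron]
        apply Finset.prod_eq_zero (Finset.mem_univ k)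
        simp [hk, Matrix.one_apply, Ne.symm hne]
      simp [hg, this]
  have key : ∑ p : (Fin d → Fin n) × (Fin d → Fin n), g p = ∑ x : Fin d → Fin n, g (φ x) := by
    rw [← Finset.sum_subset (Finset.subset_univ (Finset.image φ Finset.univ)) hzero,
      Finset.sum_image (fun a _ b _ h => hinj h)]
  have hRHS : (L * ptrans κ M * R) i j = ∑ p : (Fin d → Fin n) × (Fin d → Fin n), g p := by
    rw [Matrix.mul_apply]
    simp only [Matrix.mul_apply, Finset.sum_mul]
    rw [Finset.sum_comm, ← Finset.sum_product']
    simp [hg, Finset.univ_product_univ]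
  rw [hRHS, key]
  simp only [ptrans, Matrix.mul_apply]
  refine Finset.sum_congr rfl fun x _ => ?_
  have h1 : (fun k => if k ∈ κ then (φ x).2 k else (φ x).1 k) = x := by
    funext k; by_cases hk : k ∈ κ <;> simp [hφ, hk]
  have h2 : (fun k => if k ∈ κ then (φ x).1 k else (φ x).2 k)
      = fun k => if k ∈ κ then i k else j k := by
    funext k; by_cases hk : k ∈ κ <;> simp [hφ, hk]
  have h3 : L i (φ x).1 * R (φ x).2 j
      = kron B (fun k => if k ∈ κ then j k else i k) x := by
    rw [hL, hR, kron, kron, kron, ← Finset.prod_mul_distrib]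
    refine Finset.prod_congr rfl fun k _ => ?_
    by_cases hk : k ∈ κ <;> simp [hφ, hk, Matrix.one_apply]
  rw [hg]
  simp only [ptrans, h1, h2]
  rw [mul_right_comm, h3]
end

section
/- Over a finite field F, for every r ≥ 0 the number of n^d × n^d matrices over F with PT-rank at most r is at most (r + 2^d)^{2^d} · |F|^{2 r n^d}. -/
open Matrix BigOperators

/-- A matrix is PT-basic if some partial transpose of it has rank 1. -/
def IsPTBasic {F : Type*} [Field F] {n d : ℕ}
    (M : Matrix (Fin d → Fin n) (Fin d → Fin n) F) : Prop :=
  ∃ κ : Finset (Fin d), (ptrans κ M).rank = 1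

/-- The PT-rank of `M`: the minimum number of PT-basic matrices summing to `M`. -/
noncomputable def PTrank {F : Type*} [Field F] {n d : ℕ}
    (M : Matrix (Fin d → Fin n) (Fin d → Fin n) F) : ℕ :=
  sInf { r | ∃ P : Fin r → Matrix (Fin d → Fin n) (Fin d → Fin n) F,
    (∀ i, IsPTBasic (P i)) ∧ M = ∑ i, P i }

/-!
Write a matrix of PT-rank at most `r` as a sum of PT-basic matrices and group the summands by
the partial transpose `κ` that turns them into rank-one matrices `u vᵀ`. The matrix is then
determined by the group sizes `ρ κ`, which sum to at most `r` (at most `(r + 1)^{2^d}` choices),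
together with at most `r` pairs of vectors `(u, v)` in `F^{n^d}` (at most `|F|^{2 r n^d}`
choices).
-/

namespace Matrix

variable {K m n : Type*} [Field K] [Fintype n]

theorem rank_eq_zero_iff {A : Matrix m n K} : A.rank = 0 ↔ A = 0 := by
  classical
  refine ⟨fun h => ?_, fun h => h ▸ rank_zero⟩
  have hA : A.mulVecLin = 0 := LinearMap.range_eq_bot.mp (Submodule.finrank_eq_zero.mp h)
  ext i j
  simpa using congr_fun (LinearMap.congr_fun hA (Pi.single j 1)) i

theorem rank_le_one_iff_exists_vecMulVec [DecidableEq n] {A : Matrix m n K} :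
    A.rank ≤ 1 ↔ ∃ u v, A = vecMulVec u v := by
  refine ⟨fun h => ?_, fun ⟨u, v, hA⟩ => hA ▸ rank_vecMulVec_le u v⟩
  obtain ⟨⟨u, _⟩, hu⟩ :=
    finrank_le_one_iff.mp (show Module.finrank K (LinearMap.range A.mulVecLin) ≤ 1 from h)
  choose c hc using fun j => hu ⟨A *ᵥ Pi.single j 1, LinearMap.mem_range_self A.mulVecLin _⟩
  refine ⟨u, c, ?_⟩
  ext i j
  simpa [vecMulVec_apply, mul_comm] using (congr_fun (congr_arg Subtype.val (hc j)) i).symm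

theorem rank_eq_one_iff_exists_vecMulVec [DecidableEq n] {A : Matrix m n K} :
    A.rank = 1 ↔ A ≠ 0 ∧ ∃ u v, A = vecMulVec u v := by
  rw [← rank_le_one_iff_exists_vecMulVec, Ne, ← rank_eq_zero_iff]
  omega

end Matrix

section PartialTranspose

variable {F : Type*} [Field F] {n d : ℕ}

@[simp]
theorem ptrans_empty (M : Matrix (Fin d → Fin n) (Fin d → Fin n) F) : ptrans ∅ M = M := by
  ext i j
  simp [ptrans]

@[simp]
theorem ptrans_ptrans (κ : Finset (Fin d)) (M : Matrix (Fin d → Fin n) (Fin d → Fin n) F) :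
    ptrans κ (ptrans κ M) = M := by
  ext i j
  simp only [ptrans]
  congr 1 <;> funext k <;> split_ifs <;> rfl

theorem IsPTBasic.exists_eq_ptrans_vecMulVec {M : Matrix (Fin d → Fin n) (Fin d → Fin n) F}
    (hM : IsPTBasic M) : ∃ κ u v, M = ptrans κ (vecMulVec u v) := by
  obtain ⟨κ, hκ⟩ := hM
  obtain ⟨-, u, v, huv⟩ := rank_eq_one_iff_exists_vecMulVec.mp hκ
  exact ⟨κ, u, v, by rw [← huv, ptrans_ptrans]⟩

theorem isPTBasic_single (i j : Fin d → Fin n) {x : F} (hx : x ≠ 0) :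
    IsPTBasic (single i j x) := by
  refine ⟨∅, ?_⟩
  rw [ptrans_empty, rank_eq_one_iff_exists_vecMulVec]
  refine ⟨fun h => hx (by simpa using congr_fun₂ h i j), Pi.single i x, Pi.single j 1, ?_⟩
  ext a b
  simp only [single, of_apply, vecMulVec_apply, Pi.single_apply]
  grind

theorem exists_fin_sum_isPTBasic (M : Matrix (Fin d → Fin n) (Fin d → Fin n) F) :
    ∃ r, ∃ P : Fin r → Matrix (Fin d → Fin n) (Fin d → Fin n) F,
      (∀ i, IsPTBasic (P i)) ∧ M = ∑ i, P i := by
  induction M using Matrix.induction_on' with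
  | h_zero => exact ⟨0, Fin.elim0, fun i => i.elim0, by simp⟩
  | h_add A B hA hB =>
    obtain ⟨a, P, hP, rfl⟩ := hA
    obtain ⟨b, Q, hQ, rfl⟩ := hB
    exact ⟨a + b, Fin.append P Q, Fin.addCases (by simpa using hP) (by simpa using hQ),
      by simp [Fin.sum_univ_add]⟩
  | h_std_basis i j x =>
    by_cases hx : x = 0
    · exact ⟨0, Fin.elim0, fun i => i.elim0, by simp [hx]⟩
    · exact ⟨1, fun _ => single i j x, fun _ => isPTBasic_single i j hx, by simp⟩

theorem exists_PTrank_sum_isPTBasic (M : Matrix (Fin d → Fin n) (Fin d → Fin n) F) :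
    ∃ P : Fin (PTrank M) → Matrix (Fin d → Fin n) (Fin d → Fin n) F,
      (∀ i, IsPTBasic (P i)) ∧ M = ∑ i, P i :=
  Nat.sInf_mem (exists_fin_sum_isPTBasic M)

end PartialTranspose

abbrev Splitting (ι : Type*) [Fintype ι] (r : ℕ) :=
  {ρ : ι → Fin (r + 1) // ∑ i, (ρ i : ℕ) ≤ r}

abbrev SplitFamily (ι α : Type*) [Fintype ι] (r : ℕ) :=
  Σ ρ : Splitting ι r, Π i, Fin (ρ.1 i) → α

section SplitFamily

variable {ι α : Type*} [Fintype ι] [DecidableEq ι] {r : ℕ}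

theorem card_splitFamily_le [Fintype α] [Nonempty α] :
    Fintype.card (SplitFamily ι α r) ≤ (r + 1) ^ Fintype.card ι * Fintype.card α ^ r := by
  have hfiber (ρ : Splitting ι r) :
      Fintype.card (Π i, Fin (ρ.1 i) → α) ≤ Fintype.card α ^ r := by
    rw [Fintype.card_pi]
    simp only [Fintype.card_fun, Fintype.card_fin]
    rw [Finset.prod_pow_eq_pow_sum]
    exact Nat.pow_le_pow_right Fintype.card_pos ρ.2
  calc Fintype.card (SplitFamily ι α r)
      = ∑ ρ : Splitting ι r, Fintype.card (Π i, Fin (ρ.1 i) → α) := Fintype.card_sigma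
    _ ≤ ∑ _ρ : Splitting ι r, Fintype.card α ^ r := Finset.sum_le_sum fun ρ _ => hfiber ρ
    _ = Fintype.card (Splitting ι r) * Fintype.card α ^ r := by simp
    _ ≤ (r + 1) ^ Fintype.card ι * Fintype.card α ^ r := by
      gcongr
      simpa using Fintype.card_subtype_le (fun ρ : ι → Fin (r + 1) => ∑ i, (ρ i : ℕ) ≤ r)

theorem exists_splitFamily_sum_eq {β : Type*} [AddCommMonoid β] {k : ℕ}
    (hk : k ≤ r) (c : Fin k → ι) (w : Fin k → α) (f : ι → α → β) :
    ∃ t : SplitFamily ι α r, ∑ j, f (c j) (w j) = ∑ i, ∑ j, f i (t.2 i j) := by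
  have hfibers : ∑ i, Fintype.card {j // c j = i} = k := by
    simpa using Fintype.sum_fiberwise c (fun _ => (1 : ℕ))
  have hfiber_lt (i : ι) : Fintype.card {j // c j = i} < r + 1 :=
    Nat.lt_succ_of_le <| (hfibers ▸ Finset.single_le_sum (fun _ _ => Nat.zero_le _)
      (Finset.mem_univ i)).trans hk
  let ρ : Splitting ι r := ⟨fun i => ⟨_, hfiber_lt i⟩, hfibers.trans_le hk⟩
  refine ⟨⟨ρ, fun i j => w ((Fintype.equivFin {j // c j = i}).symm j)⟩, ?_⟩
  rw [← Fintype.sum_fiberwise c]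
  refine Fintype.sum_congr _ _ fun i => ?_
  exact Fintype.sum_equiv (Fintype.equivFin _) _ _ fun ⟨j, hj⟩ => by simp [hj]

end SplitFamily

abbrev PTCode (F : Type*) (n d r : ℕ) :=
  SplitFamily (Finset (Fin d)) (((Fin d → Fin n) → F) × ((Fin d → Fin n) → F)) r

section Counting

variable {F : Type*} [Field F] {n d r : ℕ}

def ptSum (t : PTCode F n d r) : Matrix (Fin d → Fin n) (Fin d → Fin n) F :=
  ∑ κ, ∑ j, ptrans κ (vecMulVec (t.2 κ j).1 (t.2 κ j).2)

theorem exists_ptSum_eq_of_PTrank_le {M : Matrix (Fin d → Fin n) (Fin d → Fin n) F}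
    (hM : PTrank M ≤ r) : ∃ t : PTCode F n d r, ptSum t = M := by
  obtain ⟨P, hP, hMP⟩ := exists_PTrank_sum_isPTBasic M
  choose κ u v huv using fun i => (hP i).exists_eq_ptrans_vecMulVec
  obtain ⟨t, ht⟩ := exists_splitFamily_sum_eq hM κ (fun i => (u i, v i))
    fun κ w => ptrans κ (vecMulVec w.1 w.2)
  exact ⟨t, by rw [ptSum, ← ht]; exact (hMP.trans (Fintype.sum_congr _ _ huv)).symm⟩

theorem card_PTCode_le [Fintype F] :
    Fintype.card (PTCode F n d r) ≤ (r + 1) ^ 2 ^ d * Fintype.card F ^ (2 * r * n ^ d) := by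
  have hα : Fintype.card (((Fin d → Fin n) → F) × ((Fin d → Fin n) → F)) =
      Fintype.card F ^ (2 * n ^ d) := by
    simp only [Fintype.card_prod, Fintype.card_fun, Fintype.card_fin, ← pow_add, two_mul]
  have := card_splitFamily_le (ι := Finset (Fin d))
    (α := ((Fin d → Fin n) → F) × ((Fin d → Fin n) → F)) (r := r)
  rwa [Fintype.card_finset, Fintype.card_fin, hα, ← pow_mul, mul_right_comm] at this

end Counting

/-- Over a finite field `F`, the number of `n^d × n^d` matrices of PT-rank at most `r` is
at most `(r + 2^d)^{2^d} · |F|^{2 r n^d}`. -/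
theorem stmt9 {F : Type*} [Field F] [Fintype F] (n d r : ℕ) :
    Nat.card {M : Matrix (Fin d → Fin n) (Fin d → Fin n) F // PTrank M ≤ r} ≤
      (r + 2 ^ d) ^ (2 ^ d) * (Fintype.card F) ^ (2 * r * n ^ d) := by
  calc Nat.card {M : Matrix (Fin d → Fin n) (Fin d → Fin n) F // PTrank M ≤ r}
      ≤ Nat.card (Set.range (ptSum : PTCode F n d r → _)) :=
        Nat.card_mono (Set.toFinite _) fun _ hM => exists_ptSum_eq_of_PTrank_le hM
    _ ≤ Fintype.card (PTCode F n d r) :=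
        (Finite.card_range_le _).trans_eq Nat.card_eq_fintype_card
    _ ≤ (r + 1) ^ 2 ^ d * Fintype.card F ^ (2 * r * n ^ d) := card_PTCode_le
    _ ≤ (r + 2 ^ d) ^ (2 ^ d) * (Fintype.card F) ^ (2 * r * n ^ d) := by
        gcongr
        exact Nat.one_le_two_pow
end

section
/- For tensors A : [n]^{2d} → F and B : [n]^{2e} → F and indices a, b, c ∈ {0,1}, α ∈ {0,1}^{d−1}, β ∈ {0,1}^{e−1}, the matrix flattening of the tensor product satisfies Mat_{I_{a,(α,b,β),c}, J_{a,(α,b,β),c}}(A ⊗ B) = Mat_{I_{a,α,b}, J_{a,α,b}}(A) ⊠ Mat_{I_{b,β,c}, J_{b,β,c}}(B); consequently relrk_{a,(α,b,β),c}(A ⊗ B) = relrk_{a,α,b}(A) · relrk_{b,β,c}(B). -/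
open Matrix BigOperators

/-- Membership function of the row-index set `I_{a,α,b} ⊆ [2d]` (here `d = e+1`,
0-indexed coordinates `0,…,2e+1` standing for `1,…,2d`): coordinate `1` (i.e. `t = 0`)
belongs to `I` iff `a = 1`; coordinate `2d` (i.e. `t = 2e+1`) belongs to `I` iff `b = 0`;
and for `k ∈ [d-1]` exactly one of the coordinates `2k, 2k+1` belongs to `I`, as selected
by `α_k`. -/
def ptI (e : ℕ) (a b : Bool) (α : Fin e → Bool) : Finset (Fin (2 * e + 2)) :=
  Finset.univ.filter fun t =>
    (if _h0 : (t : ℕ) = 0 then a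
     else if _hl : (t : ℕ) = 2 * e + 1 then !b
     else (α ⟨((t : ℕ) - 1) / 2, by have := t.isLt; omega⟩ ==
        decide (((t : ℕ) - 1) % 2 = 1))) = true

/-- The matrix flattening `Mat_{S,Sᶜ}(A)` of an order-`m` tensor, with rows reading the
coordinates in `S` and columns the coordinates in the complement.  (Rows and columns are
indexed by full assignments, which duplicates rows/columns but preserves the rank.) -/
def flat {F : Type*} [Field F] {n m : ℕ} (S : Finset (Fin m)) (A : (Fin m → Fin n) → F) :
    Matrix (Fin m → Fin n) (Fin m → Fin n) F :=
  fun x y => A (fun t => if t ∈ S then x t else y t)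

/-- The relative rank `relrk_{a,α,b}(A) = n^{-d} · rank(Mat_{I_{a,α,b},J_{a,α,b}}(A))`
of an order-`2d` tensor (`d = e+1`). -/
noncomputable def relrk {F : Type*} [Field F] (n e : ℕ) (a b : Bool) (α : Fin e → Bool)
    (A : (Fin (2 * e + 2) → Fin n) → F) : ℝ :=
  ((flat (ptI e a b α) A).rank : ℝ) / (n : ℝ) ^ (e + 1)

/-- The complexity measure
`ρ(A) = max_{a,b} min_{{X_α} ⊢ A} ∑_α relrk_{a,α,b}(X_α)` on order-`2d` tensors. -/
noncomputable def rho {F : Type*} [Field F] (n e : ℕ)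
    (A : (Fin (2 * e + 2) → Fin n) → F) : ℝ :=
  ⨆ a : Bool, ⨆ b : Bool,
    sInf { r : ℝ | ∃ X : (Fin e → Bool) → ((Fin (2 * e + 2) → Fin n) → F),
      (∑ α, X α) = A ∧ r = ∑ α, relrk n e a b α (X α) }

/-- Concatenation `(α, b, β)` of middle-index strings. -/
def midApp {d₁ d₂ : ℕ} (α : Fin d₁ → Bool) (b : Bool) (β : Fin d₂ → Bool) :
    Fin (d₁ + d₂ + 1) → Bool :=
  fun k => if h : (k : ℕ) < d₁ then α ⟨k, h⟩
    else if _h2 : (k : ℕ) = d₁ then b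
    else β ⟨(k : ℕ) - d₁ - 1, by have := k.isLt; omega⟩

/-- Tensor product of an order-`2(d₁+1)` tensor and an order-`2(d₂+1)` tensor, giving an
order-`2(d₁+d₂+2)` tensor. -/
def tenProd {F : Type*} [Field F] {n d₁ d₂ : ℕ} (A : (Fin (2 * d₁ + 2) → Fin n) → F)
    (B : (Fin (2 * d₂ + 2) → Fin n) → F) : (Fin (2 * (d₁ + d₂ + 1) + 2) → Fin n) → F :=
  fun x => A (fun t => x ⟨(t : ℕ), by have := t.isLt; omega⟩) *
    B (fun t => x ⟨2 * d₁ + 2 + (t : ℕ), by have := t.isLt; omega⟩)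

/-- Splitting an assignment of the combined coordinates into its two halves. -/
def splitIdx {n d₁ d₂ : ℕ} (x : Fin (2 * (d₁ + d₂ + 1) + 2) → Fin n) :
    ((Fin (2 * d₁ + 2) → Fin n) × ((Fin (2 * d₂ + 2) → Fin n))) :=
  (fun t => x ⟨(t : ℕ), by have := t.isLt; omega⟩,
   fun t => x ⟨2 * d₁ + 2 + (t : ℕ), by have := t.isLt; omega⟩)


section RankKronecker

variable {F : Type*} [Field F]

open TensorProduct in
lemma finrank_range_tmap {M N M' N' : Type*} [AddCommGroup M] [Module F M]
    [AddCommGroup N] [Module F N] [AddCommGroup M'] [Module F M']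
    [AddCommGroup N'] [Module F N'] (f : M →ₗ[F] M') (g : N →ₗ[F] N') :
    Module.finrank F (LinearMap.range (TensorProduct.map f g)) =
      Module.finrank F (LinearMap.range f) * Module.finrank F (LinearMap.range g) := by
  have hcomp : (TensorProduct.map (LinearMap.range f).subtype (LinearMap.range g).subtype).comp
      (TensorProduct.map f.rangeRestrict g.rangeRestrict) = TensorProduct.map f g := by
    rw [← TensorProduct.map_comp]
    congr 1 <;> exact Submodule.subtype_comp_codRestrict _ _ _
  have hsurj : Function.Surjective
      (TensorProduct.map f.rangeRestrict g.rangeRestrict) :=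
    TensorProduct.map_surjective f.surjective_rangeRestrict g.surjective_rangeRestrict
  have hinj : Function.Injective
      (TensorProduct.map (LinearMap.range f).subtype (LinearMap.range g).subtype) := by
    rw [← LinearMap.lTensor_comp_rTensor]
    exact (Module.Flat.lTensor_preserves_injective_linearMap _
        (Submodule.injective_subtype _)).comp
      (Module.Flat.rTensor_preserves_injective_linearMap _ (Submodule.injective_subtype _))
  rw [← hcomp, LinearMap.range_comp_of_range_eq_top _ (LinearMap.range_eq_top.mpr hsurj)]
  rw [(LinearEquiv.ofInjective _ hinj).symm.finrank_eq, Module.finrank_tensorProduct]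

lemma rank_kroneckerMap {ι κ ι' κ' : Type*} [Fintype ι] [Fintype κ] [Fintype ι'] [Fintype κ']
    [DecidableEq ι] [DecidableEq κ] (A : Matrix ι' ι F) (B : Matrix κ' κ F) :
    (Matrix.kroneckerMap (· * ·) A B).rank = A.rank * B.rank := by
  classical
  rw [Matrix.rank_eq_finrank_range_toLin (Matrix.kroneckerMap (· * ·) A B)
      ((Pi.basisFun F ι').tensorProduct (Pi.basisFun F κ'))
      ((Pi.basisFun F ι).tensorProduct (Pi.basisFun F κ)),
    Matrix.rank_eq_finrank_range_toLin A (Pi.basisFun F ι') (Pi.basisFun F ι),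
    Matrix.rank_eq_finrank_range_toLin B (Pi.basisFun F κ') (Pi.basisFun F κ)]
  rw [Matrix.toLin_kronecker (Pi.basisFun F ι) (Pi.basisFun F κ) (Pi.basisFun F ι')
    (Pi.basisFun F κ') A B]
  exact finrank_range_tmap _ _

end RankKronecker

lemma midApp_left {d₁ d₂ : ℕ} (α : Fin d₁ → Bool) (b : Bool) (β : Fin d₂ → Bool)
    (j : ℕ) (h : j < d₁) :
    midApp α b β ⟨j, by omega⟩ = α ⟨j, h⟩ := by
  simp only [midApp]
  rw [dif_pos (by simpa using h)]

lemma midApp_mid {d₁ d₂ : ℕ} (α : Fin d₁ → Bool) (b : Bool) (β : Fin d₂ → Bool) :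
    midApp α b β ⟨d₁, by omega⟩ = b := by
  simp only [midApp]
  rw [dif_neg (by simp), dif_pos (by simp)]

lemma midApp_right {d₁ d₂ : ℕ} (α : Fin d₁ → Bool) (b : Bool) (β : Fin d₂ → Bool)
    (j : ℕ) (h : j < d₂) :
    midApp α b β ⟨d₁ + 1 + j, by omega⟩ = β ⟨j, h⟩ := by
  simp only [midApp]
  rw [dif_neg (by simp; omega), dif_neg (by omega)]
  congr 1
  exact Fin.ext (by simp; omega)

lemma memL {d₁ d₂ : ℕ} (a b c : Bool) (α : Fin d₁ → Bool) (β : Fin d₂ → Bool)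
    (t : Fin (2 * d₁ + 2)) :
    ((⟨(t : ℕ), by have := t.isLt; omega⟩ : Fin (2 * (d₁ + d₂ + 1) + 2)) ∈
      ptI (d₁ + d₂ + 1) a c (midApp α b β)) ↔ t ∈ ptI d₁ a b α := by
  simp only [ptI, Finset.mem_filter, Finset.mem_univ, true_and]
  by_cases h0 : (t : ℕ) = 0
  · simp only [dif_pos h0]
  by_cases hl : (t : ℕ) = 2 * d₁ + 1
  · simp only [dif_neg h0, dif_pos hl,
      dif_neg (show ¬ (t : ℕ) = 2 * (d₁ + d₂ + 1) + 1 by omega)]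
    have h1 : (⟨((t : ℕ) - 1) / 2, by omega⟩ : Fin (d₁ + d₂ + 1)) = ⟨d₁, by omega⟩ := by
      apply Fin.ext; simp; omega
    rw [h1]
    rw [midApp_mid]
    have h3 : decide (((t : ℕ) - 1) % 2 = 1) = false := by
      simp; omega
    rw [h3]; cases b <;> simp
  · have ht := t.isLt
    simp only [dif_neg h0, dif_neg hl,
      dif_neg (show ¬ (t : ℕ) = 2 * (d₁ + d₂ + 1) + 1 by omega)]
    rw [midApp_left α b β _ (by omega)]

set_option maxHeartbeats 1000000 in
lemma memR {d₁ d₂ : ℕ} (a b c : Bool) (α : Fin d₁ → Bool) (β : Fin d₂ → Bool)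
    (t : Fin (2 * d₂ + 2)) :
    ((⟨2 * d₁ + 2 + (t : ℕ), by have := t.isLt; omega⟩ : Fin (2 * (d₁ + d₂ + 1) + 2)) ∈
      ptI (d₁ + d₂ + 1) a c (midApp α b β)) ↔ t ∈ ptI d₂ b c β := by
  simp only [ptI, Finset.mem_filter, Finset.mem_univ, true_and]
  by_cases h0 : (t : ℕ) = 0
  · simp only [dif_pos h0, dif_neg (show ¬ 2 * d₁ + 2 + (t : ℕ) = 0 by omega),
      dif_neg (show ¬ 2 * d₁ + 2 + (t : ℕ) = 2 * (d₁ + d₂ + 1) + 1 by omega)]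
    have h1 : (⟨(2 * d₁ + 2 + (t : ℕ) - 1) / 2, by omega⟩ : Fin (d₁ + d₂ + 1)) =
        ⟨d₁, by omega⟩ := by
      apply Fin.ext; simp; omega
    rw [h1]
    rw [midApp_mid]
    have h3 : decide ((2 * d₁ + 2 + (t : ℕ) - 1) % 2 = 1) = true := by
      simp; omega
    rw [h3]; cases b <;> simp
  by_cases hl : (t : ℕ) = 2 * d₂ + 1
  · simp only [dif_neg h0, dif_pos hl, dif_neg (show ¬ 2 * d₁ + 2 + (t : ℕ) = 0 by omega),
      dif_pos (show 2 * d₁ + 2 + (t : ℕ) = 2 * (d₁ + d₂ + 1) + 1 by omega)]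
  · have ht := t.isLt
    simp only [dif_neg h0, dif_neg hl, dif_neg (show ¬ 2 * d₁ + 2 + (t : ℕ) = 0 by omega),
      dif_neg (show ¬ 2 * d₁ + 2 + (t : ℕ) = 2 * (d₁ + d₂ + 1) + 1 by omega)]
    have h1 : (⟨(2 * d₁ + 2 + (t : ℕ) - 1) / 2, by omega⟩ : Fin (d₁ + d₂ + 1)) =
        ⟨d₁ + 1 + ((t : ℕ) - 1) / 2, by omega⟩ := by
      apply Fin.ext; simp; omega
    rw [h1]
    rw [midApp_right α b β _ (show ((t : ℕ) - 1) / 2 < d₂ by omega)]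
    have h3 : decide ((2 * d₁ + 2 + (t : ℕ) - 1) % 2 = 1) =
        decide (((t : ℕ) - 1) % 2 = 1) := by
      rw [decide_eq_decide]; omega
    rw [h3]

def splitEquiv {n d₁ d₂ : ℕ} :
    (Fin (2 * (d₁ + d₂ + 1) + 2) → Fin n) ≃
      ((Fin (2 * d₁ + 2) → Fin n) × (Fin (2 * d₂ + 2) → Fin n)) where
  toFun := splitIdx
  invFun p := fun s => if h : (s : ℕ) < 2 * d₁ + 2 then p.1 ⟨s, h⟩
    else p.2 ⟨(s : ℕ) - (2 * d₁ + 2), by have := s.isLt; omega⟩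
  left_inv x := by
    funext s
    simp only [splitIdx]
    split
    · congr 1
    · congr 1
      apply Fin.ext
      simp
      omega
  right_inv p := by
    refine Prod.ext ?_ ?_ <;> funext t <;> simp only [splitIdx]
    · rw [dif_pos (by exact t.isLt)]
    · rw [dif_neg (by omega)]
      congr 1
      apply Fin.ext
      simp


/-- The flattening of a tensor product is the Kronecker product of the flattenings (up to
the index-splitting bijection), and consequently the relative rank is multiplicative:
`relrk_{a,(α,b,β),c}(A ⊗ B) = relrk_{a,α,b}(A) · relrk_{b,β,c}(B)`. -/
theorem stmt12 {F : Type*} [Field F] {n d₁ d₂ : ℕ} (hn : 0 < n) (a b c : Bool)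
    (α : Fin d₁ → Bool) (β : Fin d₂ → Bool)
    (A : (Fin (2 * d₁ + 2) → Fin n) → F) (B : (Fin (2 * d₂ + 2) → Fin n) → F) :
    flat (ptI (d₁ + d₂ + 1) a c (midApp α b β)) (tenProd A B) =
      Matrix.submatrix
        (Matrix.kroneckerMap (· * ·) (flat (ptI d₁ a b α) A) (flat (ptI d₂ b c β) B))
        splitIdx splitIdx ∧
    relrk n (d₁ + d₂ + 1) a c (midApp α b β) (tenProd A B) =
      relrk n d₁ a b α A * relrk n d₂ b c β B := by
  have hflat : flat (ptI (d₁ + d₂ + 1) a c (midApp α b β)) (tenProd A B) =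
      Matrix.submatrix
        (Matrix.kroneckerMap (· * ·) (flat (ptI d₁ a b α) A) (flat (ptI d₂ b c β) B))
        splitIdx splitIdx := by
    funext x y
    simp only [flat, tenProd, Matrix.submatrix_apply, Matrix.kroneckerMap_apply, splitIdx]
    congr 1
    · congr 1
      funext t
      by_cases h : t ∈ ptI d₁ a b α
      · rw [if_pos h, if_pos ((memL a b c α β t).mpr h)]
      · rw [if_neg h, if_neg (fun hh => h ((memL a b c α β t).mp hh))]
    · congr 1
      funext t
      by_cases h : t ∈ ptI d₂ b c β
      · rw [if_pos h, if_pos ((memR a b c α β t).mpr h)]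
      · rw [if_neg h, if_neg (fun hh => h ((memR a b c α β t).mp hh))]
  refine ⟨hflat, ?_⟩
  have hrank : (flat (ptI (d₁ + d₂ + 1) a c (midApp α b β)) (tenProd A B)).rank =
      (flat (ptI d₁ a b α) A).rank * (flat (ptI d₂ b c β) B).rank := by
    rw [hflat]
    rw [show (splitIdx : (Fin (2 * (d₁ + d₂ + 1) + 2) → Fin n) →
        ((Fin (2 * d₁ + 2) → Fin n) × (Fin (2 * d₂ + 2) → Fin n))) = ⇑splitEquiv from rfl]
    rw [Matrix.rank_submatrix _ splitEquiv splitEquiv]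
    exact rank_kroneckerMap _ _
  simp only [relrk, hrank, Nat.cast_mul]
  rw [div_mul_div_comm]
  congr 1
  rw [← pow_add]
  congr 1
  omega
end

section
/- For tensors A : [n]^{2d} → F and B : [n]^{2e} → F, the measure ρ satisfies ρ(A ⊗ B) ≤ n^{−1} · min{ρ(A), ρ(B)}. -/
open Matrix BigOperators

/-!
If `a ≠ b`, one side of the flattening `Mat_{I_{a,α,b}, J_{a,α,b}}` reads only `d - 1` coordinates,
so `relrk_{a,α,b} ≤ n⁻¹`.  Fix `a, c` and put `b = ¬c`.  A decomposition `A = ∑_α X_α` yields the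
decomposition `A ⊗ B = ∑_α X_α ⊗ B`, with `X_α ⊗ B` placed at the middle string `(α, b, 0)`; by
multiplicativity of the relative rank its `(a, c)`-cost is at most
`∑_α relrk_{a,α,b}(X_α) · relrk_{b,0,c}(B) ≤ n⁻¹ ∑_α relrk_{a,α,b}(X_α)`.
Hence `ρ(A ⊗ B) ≤ n⁻¹ ρ(A)`, and symmetrically `ρ(A ⊗ B) ≤ n⁻¹ ρ(B)`.
-/

open scoped Kronecker

section

variable {F : Type*} [Field F]

namespace Matrix

variable {m n m' n' : Type*}

theorem exists_eq_mul_of_rank [Fintype n] (P : Matrix m n F) :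
    ∃ (U : Matrix m (Fin P.rank) F) (C : Matrix (Fin P.rank) n F), P = U * C := by
  let V := Submodule.span F (Set.range P.col)
  have : Module.Finite F V := Module.Finite.span_of_finite F (Set.finite_range _)
  let b : Module.Basis (Fin P.rank) F V :=
    (Module.finBasis F V).reindex (finCongr P.rank_eq_finrank_span_cols.symm)
  have hcol : ∀ y, P.col y ∈ V := fun y => Submodule.subset_span ⟨y, rfl⟩
  refine ⟨of fun x i => (b i : m → F) x, of fun i y => b.repr ⟨_, hcol y⟩ i, ?_⟩
  ext x y
  have := congrArg (fun v : V => (v : m → F) x) (b.sum_repr ⟨_, hcol y⟩)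
  simp only [Submodule.coe_sum, Submodule.coe_smul, Finset.sum_apply, Pi.smul_apply,
    smul_eq_mul] at this
  simp only [mul_apply, of_apply, mul_comm ((b _ : m → F) x)]
  exact this.symm

theorem rank_kronecker_le [Fintype n] [Fintype n'] (P : Matrix m n F) (Q : Matrix m' n' F) :
    (P ⊗ₖ Q).rank ≤ P.rank * Q.rank := by
  obtain ⟨U, C, hP⟩ := P.exists_eq_mul_of_rank
  obtain ⟨U', C', hQ⟩ := Q.exists_eq_mul_of_rank
  calc (P ⊗ₖ Q).rank = (U ⊗ₖ U' * C ⊗ₖ C').rank := by rw [← mul_kronecker_mul, ← hP, ← hQ]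
    _ ≤ (U ⊗ₖ U').rank := rank_mul_le_left _ _
    _ ≤ P.rank * Q.rank := by simpa using rank_le_card_width (U ⊗ₖ U')

end Matrix

section PtI

variable {e : ℕ} {a b : Bool} {α : Fin e → Bool} {t : Fin (2 * e + 2)}

theorem mem_ptI_of_val_eq_zero (h : (t : ℕ) = 0) : t ∈ ptI e a b α ↔ a = true := by
  simp only [ptI, Finset.mem_filter, Finset.mem_univ, true_and, dif_pos h]

theorem mem_ptI_of_val_eq_last (h : (t : ℕ) = 2 * e + 1) : t ∈ ptI e a b α ↔ b = false := by
  simp only [ptI, Finset.mem_filter, Finset.mem_univ, true_and, dif_neg (show (t : ℕ) ≠ 0 by omega),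
    dif_pos h, Bool.not_eq_true']

theorem mem_ptI_of_pos_of_lt (h₀ : 0 < (t : ℕ)) (hl : (t : ℕ) < 2 * e + 1) :
    t ∈ ptI e a b α ↔ α ⟨((t : ℕ) - 1) / 2, by omega⟩ = decide (((t : ℕ) - 1) % 2 = 1) := by
  simp only [ptI, Finset.mem_filter, Finset.mem_univ, true_and, dif_neg h₀.ne', dif_neg hl.ne,
    beq_iff_eq]

end PtI

theorem ptI_compl (e : ℕ) (a b : Bool) (α : Fin e → Bool) :
    (ptI e a b α)ᶜ = ptI e (!a) (!b) (fun k => !α k) := by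
  ext t
  rw [Finset.mem_compl]
  by_cases h₀ : (t : ℕ) = 0
  · rw [mem_ptI_of_val_eq_zero h₀, mem_ptI_of_val_eq_zero h₀, Bool.not_eq_true, Bool.not_eq_true']
  by_cases hl : (t : ℕ) = 2 * e + 1
  · rw [mem_ptI_of_val_eq_last hl, mem_ptI_of_val_eq_last hl, Bool.not_eq_false, Bool.not_eq_false']
  have := t.isLt
  rw [mem_ptI_of_pos_of_lt (by omega) (by omega), mem_ptI_of_pos_of_lt (by omega) (by omega)]
  cases α ⟨((t : ℕ) - 1) / 2, by omega⟩ <;> simp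

theorem card_ptI_false_true_le (e : ℕ) (α : Fin e → Bool) : (ptI e false true α).card ≤ e := by
  let pos : Fin e → Fin (2 * e + 2) := fun k => ⟨2 * k + 1 + (α k).toNat, by
    have := k.isLt; have := (α k).toNat_le; omega⟩
  have hsub : ptI e false true α ⊆ Finset.univ.image pos := by
    intro t ht
    have h₀ : (t : ℕ) ≠ 0 := fun h => by simpa using (mem_ptI_of_val_eq_zero h).1 ht
    have hl : (t : ℕ) ≠ 2 * e + 1 := fun h => by simpa using (mem_ptI_of_val_eq_last h).1 ht
    have := t.isLt
    refine Finset.mem_image.2 ⟨⟨((t : ℕ) - 1) / 2, by omega⟩, Finset.mem_univ _, Fin.ext ?_⟩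
    simp only [pos, (mem_ptI_of_pos_of_lt (by omega) (by omega)).1 ht]
    by_cases hp : ((t : ℕ) - 1) % 2 = 1 <;> simp [hp] <;> omega
  simpa using (Finset.card_le_card hsub).trans Finset.card_image_le

theorem flat_transpose {n m : ℕ} (S : Finset (Fin m)) (A : (Fin m → Fin n) → F) :
    (flat S A)ᵀ = flat Sᶜ A := by
  ext y x
  simp only [transpose_apply, flat, Finset.mem_compl, ite_not]

theorem flat_zero {n m : ℕ} (S : Finset (Fin m)) : flat S (0 : (Fin m → Fin n) → F) = 0 := rfl

theorem rank_flat_le_pow {n m : ℕ} (S : Finset (Fin m)) (A : (Fin m → Fin n) → F) :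
    (flat S A).rank ≤ n ^ S.card := by
  let R : Matrix (S → Fin n) (Fin m → Fin n) F :=
    of fun f y => A fun t => if h : t ∈ S then f ⟨t, h⟩ else y t
  have hR : flat S A = R.submatrix (fun x t => x t) id := by
    ext x y
    simp only [flat, R, submatrix_apply, of_apply, id, dite_eq_ite]
  rw [hR]
  exact (rank_submatrix_le _ _ _).trans (by simpa using R.rank_le_card_height)

theorem rank_flat_ptI_le {n e : ℕ} (hn : 0 < n) {a b : Bool} (hab : a ≠ b) (α : Fin e → Bool)
    (A : (Fin (2 * e + 2) → Fin n) → F) : (flat (ptI e a b α) A).rank ≤ n ^ e := by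
  cases a <;> cases b <;> simp only [ne_eq, not_true_eq_false] at hab
  · exact (rank_flat_le_pow _ A).trans (Nat.pow_le_pow_right hn (card_ptI_false_true_le e α))
  · rw [← rank_transpose, flat_transpose, ptI_compl]
    exact (rank_flat_le_pow _ A).trans (Nat.pow_le_pow_right hn (card_ptI_false_true_le e _))

section MidApp

variable {d₁ d₂ : ℕ} (α : Fin d₁ → Bool) (b : Bool) (β : Fin d₂ → Bool)

theorem midApp_of_lt (k : Fin (d₁ + d₂ + 1)) (h : (k : ℕ) < d₁) : midApp α b β k = α ⟨k, h⟩ :=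
  dif_pos h

theorem midApp_of_eq (k : Fin (d₁ + d₂ + 1)) (h : (k : ℕ) = d₁) : midApp α b β k = b := by
  simp [midApp, h]

theorem midApp_of_gt (k : Fin (d₁ + d₂ + 1)) (h : d₁ < (k : ℕ)) :
    midApp α b β k = β ⟨k - d₁ - 1, by omega⟩ := by
  simp [midApp, h.not_gt, h.ne']

theorem midApp_injective_left : Function.Injective fun α : Fin d₁ → Bool => midApp α b β := by
  intro α α' h
  funext k
  have hk : midApp α b β ⟨k, by omega⟩ = midApp α' b β ⟨k, by omega⟩ := congrFun h _
  rwa [midApp_of_lt α b β _ k.isLt, midApp_of_lt α' b β _ k.isLt] at hk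

theorem midApp_injective_right : Function.Injective fun β : Fin d₂ → Bool => midApp α b β := by
  intro β β' h
  funext k
  have hk : midApp α b β ⟨d₁ + 1 + k, by omega⟩ = midApp α b β' ⟨d₁ + 1 + k, by omega⟩ :=
    congrFun h _
  rw [midApp_of_gt α b β _ (by simp; omega), midApp_of_gt α b β' _ (by simp; omega)] at hk
  convert hk using 2 <;> exact Fin.ext (by simp only; omega)

theorem mem_ptI_midApp_left (a c : Bool) (t : Fin (2 * d₁ + 2)) :
    (⟨t, by omega⟩ : Fin (2 * (d₁ + d₂ + 1) + 2)) ∈ ptI (d₁ + d₂ + 1) a c (midApp α b β) ↔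
      t ∈ ptI d₁ a b α := by
  have := t.isLt
  by_cases h₀ : (t : ℕ) = 0
  · rw [mem_ptI_of_val_eq_zero (t := t) h₀,
      mem_ptI_of_val_eq_zero (e := d₁ + d₂ + 1) (t := ⟨t, _⟩) h₀]
  rw [mem_ptI_of_pos_of_lt (e := d₁ + d₂ + 1) (t := ⟨t, _⟩) (show 0 < (t : ℕ) by omega)
    (show (t : ℕ) < 2 * (d₁ + d₂ + 1) + 1 by omega)]
  by_cases hl : (t : ℕ) = 2 * d₁ + 1
  · rw [mem_ptI_of_val_eq_last (t := t) hl, midApp_of_eq _ _ _ _ (by simp; omega)]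
    simp [hl]
  · rw [mem_ptI_of_pos_of_lt (t := t) (by omega) (by omega),
      midApp_of_lt _ _ _ _ (by simp; omega)]

theorem mem_ptI_midApp_right (a c : Bool) (t : Fin (2 * d₂ + 2)) :
    (⟨2 * d₁ + 2 + t, by omega⟩ : Fin (2 * (d₁ + d₂ + 1) + 2)) ∈
        ptI (d₁ + d₂ + 1) a c (midApp α b β) ↔ t ∈ ptI d₂ b c β := by
  have := t.isLt
  by_cases hl : (t : ℕ) = 2 * d₂ + 1
  · rw [mem_ptI_of_val_eq_last (t := t) hl,
      mem_ptI_of_val_eq_last (e := d₁ + d₂ + 1) (t := ⟨2 * d₁ + 2 + t, _⟩) (by simp; omega)]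
  rw [mem_ptI_of_pos_of_lt (e := d₁ + d₂ + 1) (t := ⟨2 * d₁ + 2 + t, _⟩)
    (show 0 < 2 * d₁ + 2 + (t : ℕ) by omega)
    (show 2 * d₁ + 2 + (t : ℕ) < 2 * (d₁ + d₂ + 1) + 1 by omega)]
  by_cases h₀ : (t : ℕ) = 0
  · rw [mem_ptI_of_val_eq_zero (t := t) h₀, midApp_of_eq _ _ _ _ (by simp; omega)]
    simp [h₀]
  · rw [mem_ptI_of_pos_of_lt (t := t) (by omega) (by omega), midApp_of_gt _ _ _ _ (by simp; omega)]
    have hk : ((2 * d₁ + 2 + (t : ℕ) - 1) / 2 - d₁ - 1 = ((t : ℕ) - 1) / 2) := by omega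
    have hpar : (2 * d₁ + 2 + (t : ℕ) - 1) % 2 = ((t : ℕ) - 1) % 2 := by omega
    simp only [hk, hpar]

end MidApp

theorem flat_tenProd {n d₁ d₂ : ℕ} (a b c : Bool) (α : Fin d₁ → Bool) (β : Fin d₂ → Bool)
    (A : (Fin (2 * d₁ + 2) → Fin n) → F) (B : (Fin (2 * d₂ + 2) → Fin n) → F) :
    flat (ptI (d₁ + d₂ + 1) a c (midApp α b β)) (tenProd A B) =
      (flat (ptI d₁ a b α) A ⊗ₖ flat (ptI d₂ b c β) B).submatrix splitIdx splitIdx := by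
  ext x y
  simp only [flat, tenProd, splitIdx, submatrix_apply, kronecker_apply, mem_ptI_midApp_left,
    mem_ptI_midApp_right]

section Relrk

variable {n e : ℕ} {a b : Bool} (α : Fin e → Bool)

theorem relrk_nonneg (A : (Fin (2 * e + 2) → Fin n) → F) : 0 ≤ relrk n e a b α A := by
  unfold relrk
  positivity

theorem relrk_zero : relrk n e a b α (0 : (Fin (2 * e + 2) → Fin n) → F) = 0 := by
  rw [relrk, flat_zero, rank_zero, Nat.cast_zero, zero_div]

theorem relrk_le_inv_of_ne (hab : a ≠ b) (A : (Fin (2 * e + 2) → Fin n) → F) :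
    relrk n e a b α A ≤ (n : ℝ)⁻¹ := by
  rcases n.eq_zero_or_pos with rfl | hn
  · simp [relrk]
  rw [relrk, div_le_iff₀ (by positivity), pow_succ', inv_mul_cancel_left₀ (by positivity)]
  exact_mod_cast rank_flat_ptI_le hn hab α A

end Relrk

theorem relrk_tenProd_le {n d₁ d₂ : ℕ} (a b c : Bool) (α : Fin d₁ → Bool) (β : Fin d₂ → Bool)
    (A : (Fin (2 * d₁ + 2) → Fin n) → F) (B : (Fin (2 * d₂ + 2) → Fin n) → F) :
    relrk n (d₁ + d₂ + 1) a c (midApp α b β) (tenProd A B) ≤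
      relrk n d₁ a b α A * relrk n d₂ b c β B := by
  have hrank := (rank_submatrix_le (R := F) _ splitIdx splitIdx).trans
    (rank_kronecker_le (flat (ptI d₁ a b α) A) (flat (ptI d₂ b c β) B))
  rw [← flat_tenProd] at hrank
  rw [relrk, relrk, relrk, div_mul_div_comm, ← pow_add,
    show d₁ + d₂ + 1 + 1 = d₁ + 1 + (d₂ + 1) by ring]
  gcongr
  exact_mod_cast hrank

def tenProdBilin {n d₁ d₂ : ℕ} :
    ((Fin (2 * d₁ + 2) → Fin n) → F) →ₗ[F] ((Fin (2 * d₂ + 2) → Fin n) → F) →ₗ[F]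
      ((Fin (2 * (d₁ + d₂ + 1) + 2) → Fin n) → F) :=
  LinearMap.mk₂ F tenProd (fun _ _ _ => by ext; simp [tenProd, add_mul])
    (fun _ _ _ => by ext; simp [tenProd, mul_assoc]) (fun _ _ _ => by ext; simp [tenProd, mul_add])
    (fun _ _ _ => by ext; simp [tenProd, mul_left_comm])

theorem csInf_le_mul_csInf {S T : Set ℝ} {c : ℝ} (hS : BddBelow S) (hT : T.Nonempty) (hc : 0 ≤ c)
    (h : ∀ t ∈ T, ∃ s ∈ S, s ≤ c * t) : sInf S ≤ c * sInf T := by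
  rw [← smul_eq_mul, ← Real.sInf_smul_of_nonneg hc]
  refine le_csInf hT.smul_set ?_
  rintro _ ⟨t, ht, rfl⟩
  obtain ⟨s, hs, hst⟩ := h t ht
  exact (csInf_le hS hs).trans hst

section DecompCost

noncomputable def decompCost (n e : ℕ) (a b : Bool) (A : (Fin (2 * e + 2) → Fin n) → F) : ℝ :=
  sInf { r : ℝ | ∃ X : (Fin e → Bool) → ((Fin (2 * e + 2) → Fin n) → F),
    (∑ α, X α) = A ∧ r = ∑ α, relrk n e a b α (X α) }

variable {n e : ℕ}

theorem rho_eq_iSup_decompCost (A : (Fin (2 * e + 2) → Fin n) → F) :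
    rho n e A = ⨆ a, ⨆ b, decompCost n e a b A :=
  rfl

theorem decompCost_le_rho (a b : Bool) (A : (Fin (2 * e + 2) → Fin n) → F) :
    decompCost n e a b A ≤ rho n e A :=
  (le_ciSup (Set.finite_range _).bddAbove b).trans
    (le_ciSup (f := fun a => ⨆ b, decompCost n e a b A) (Set.finite_range _).bddAbove a)

theorem decompCost_map_le {e' : ℕ} {a b a' b' : Bool}
    (T : ((Fin (2 * e' + 2) → Fin n) → F) →+ ((Fin (2 * e + 2) → Fin n) → F))
    {emb : (Fin e' → Bool) → (Fin e → Bool)} (hemb : Function.Injective emb) {c : ℝ} (hc : 0 ≤ c)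
    (hT : ∀ α X, relrk n e a b (emb α) (T X) ≤ c * relrk n e' a' b' α X)
    (A : (Fin (2 * e' + 2) → Fin n) → F) :
    decompCost n e a b (T A) ≤ c * decompCost n e' a' b' A := by
  refine csInf_le_mul_csInf ⟨0, ?_⟩ ⟨_, Pi.single (fun _ => false) A, by simp, rfl⟩ hc ?_
  · rintro _ ⟨X, -, rfl⟩
    exact Finset.sum_nonneg fun α _ => relrk_nonneg α (X α)
  rintro _ ⟨X, rfl, rfl⟩
  let X' := Function.extend emb X 0
  have hoff : ∀ γ ∉ Set.range emb, X' γ = 0 := fun γ hγ => Function.extend_apply' _ _ _ hγ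
  have hon : ∀ α, X' (emb α) = X α := hemb.extend_apply X 0
  refine ⟨_, ⟨fun γ => T (X' γ), ?_, rfl⟩, ?_⟩
  · rw [← map_sum, Fintype.sum_of_injective emb hemb X X' hoff fun α => (hon α).symm]
  calc ∑ γ, relrk n e a b γ (T (X' γ))
      = ∑ α, relrk n e a b (emb α) (T (X α)) :=
        (Fintype.sum_of_injective emb hemb _ _
          (fun γ hγ => by rw [hoff γ hγ, map_zero, relrk_zero]) fun α => by rw [hon]).symm
    _ ≤ ∑ α, c * relrk n e' a' b' α (X α) := Finset.sum_le_sum fun α _ => hT α (X α)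
    _ = c * ∑ α, relrk n e' a' b' α (X α) := (Finset.mul_sum _ _ _).symm

end DecompCost

section TenProd

variable {n d₁ d₂ : ℕ} (A : (Fin (2 * d₁ + 2) → Fin n) → F) (B : (Fin (2 * d₂ + 2) → Fin n) → F)

theorem decompCost_tenProd_le_left (a c : Bool) :
    decompCost n (d₁ + d₂ + 1) a c (tenProd A B) ≤ (n : ℝ)⁻¹ * decompCost n d₁ a (!c) A := by
  refine decompCost_map_le (tenProdBilin.flip B).toAddMonoidHom
    (midApp_injective_left (!c) fun _ => false) (by positivity) (fun α X => ?_) A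
  calc relrk n (d₁ + d₂ + 1) a c (midApp α (!c) fun _ => false) (tenProd X B)
      ≤ relrk n d₁ a (!c) α X * relrk n d₂ (!c) c (fun _ => false) B := relrk_tenProd_le ..
    _ ≤ relrk n d₁ a (!c) α X * (n : ℝ)⁻¹ :=
        mul_le_mul_of_nonneg_left (relrk_le_inv_of_ne _ (by cases c <;> decide) B)
          (relrk_nonneg α X)
    _ = (n : ℝ)⁻¹ * relrk n d₁ a (!c) α X := mul_comm _ _

theorem decompCost_tenProd_le_right (a c : Bool) :
    decompCost n (d₁ + d₂ + 1) a c (tenProd A B) ≤ (n : ℝ)⁻¹ * decompCost n d₂ (!a) c B := by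
  refine decompCost_map_le (tenProdBilin A).toAddMonoidHom
    (midApp_injective_right (fun _ => false) (!a)) (by positivity) (fun β Y => ?_) B
  calc relrk n (d₁ + d₂ + 1) a c (midApp (fun _ => false) (!a) β) (tenProd A Y)
      ≤ relrk n d₁ a (!a) (fun _ => false) A * relrk n d₂ (!a) c β Y := relrk_tenProd_le ..
    _ ≤ (n : ℝ)⁻¹ * relrk n d₂ (!a) c β Y :=
        mul_le_mul_of_nonneg_right (relrk_le_inv_of_ne _ (by cases a <;> decide) A)
          (relrk_nonneg β Y)

end TenProd

end

theorem stmt14_general {F : Type*} [Field F] {n d₁ d₂ : ℕ}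
    (A : (Fin (2 * d₁ + 2) → Fin n) → F) (B : (Fin (2 * d₂ + 2) → Fin n) → F) :
    rho n (d₁ + d₂ + 1) (tenProd A B) ≤ (n : ℝ)⁻¹ * min (rho n d₁ A) (rho n d₂ B) := by
  rw [rho_eq_iSup_decompCost, mul_min_of_nonneg _ _ (by positivity)]
  refine ciSup_le fun a => ciSup_le fun c => le_min ?_ ?_
  · exact (decompCost_tenProd_le_left A B a c).trans (by gcongr; exact decompCost_le_rho a (!c) A)
  · exact (decompCost_tenProd_le_right A B a c).trans (by gcongr; exact decompCost_le_rho (!a) c B)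

/-- For tensors `A` of order `2(d₁+1)` and `B` of order `2(d₂+1)`,
`ρ(A ⊗ B) ≤ n⁻¹ · min{ρ(A), ρ(B)}`. -/
theorem stmt14 {F : Type*} [Field F] {n d₁ d₂ : ℕ} (hn : 0 < n)
    (A : (Fin (2 * d₁ + 2) → Fin n) → F) (B : (Fin (2 * d₂ + 2) → Fin n) → F) :
    rho n (d₁ + d₂ + 1) (tenProd A B) ≤ (n : ℝ)⁻¹ * min (rho n d₁ A) (rho n d₂ B) :=
  stmt14_general A B
end

section
/- Let n be a prime, ω = e^{2πi/n}, d even with n > 2d, and let T be a d × d Cauchy matrix over F_n (every square submatrix of T is invertible). Define the n^d × n^d complex matrix W_T by (W_T)_{(i_1,…,i_d),(j_1,…,j_d)} = ω^{(i_1,…,i_d) T (j_1,…,j_d)^⊤}. Then for every κ ⊆ [d], the partial transpose W_T^{⊤_κ} has full rank n^d. -/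
open Matrix BigOperators

/-- `ω = e^{2πi/n}`, a primitive `n`-th root of unity. -/
noncomputable def omg (n : ℕ) : ℂ := Complex.exp (2 * Real.pi * Complex.I / n)
/-- The matrix `W_T` with entries `ω^{i⃗ T j⃗ᵀ}` (the bilinear form computed over `F_n`). -/
noncomputable def WT (n d : ℕ) (T : Matrix (Fin d) (Fin d) (ZMod n)) :
    Matrix (Fin d → Fin n) (Fin d → Fin n) ℂ :=
  fun i j => omg n ^ (∑ a : Fin d, ∑ b : Fin d,
    ((i a : ℕ) : ZMod n) * T a b * ((j b : ℕ) : ZMod n)).val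

/-!
Writing `x = (j_κ, i_{κᶜ})` and `y = (i_κ, j_{κᶜ})`, the exponent `x T yᵀ` of the partially
transposed matrix splits as `f(i) + i Q jᵀ + g(j)`, where the cross terms `f`, `g` come from the
off-diagonal blocks of `T` and `Q` is block diagonal with blocks `T_{κ,κ}ᵀ` and `T_{κᶜ,κᶜ}`.
So the matrix is a DFT matrix `ω^{u vᵀ}` with columns permuted by the invertible `Q` and with
rows and columns rescaled by roots of unity; such a DFT matrix is invertible by orthogonality of
characters.
-/

namespace Matrix

theorem rank_diagonal_mul_mul_diagonal {m n K : Type*} [Fintype m] [Fintype n]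
    [DecidableEq m] [DecidableEq n] [CommRing K] {a : m → K} {b : n → K}
    (ha : ∀ i, IsUnit (a i)) (hb : ∀ j, IsUnit (b j)) (M : Matrix m n K) :
    (diagonal a * M * diagonal b).rank = M.rank := by
  rw [rank_mul_eq_left_of_isUnit_det _ _ (by simpa [det_diagonal] using hb),
    rank_mul_eq_right_of_isUnit_det _ _ (by simpa [det_diagonal] using ha)]

variable {ι R : Type*} [Fintype ι] [CommRing R]

def transposeDiagBlock (p : ι → Prop) [DecidablePred p] (T : Matrix ι ι R) : Matrix ι ι R :=
  of fun a b => if p a then (if p b then T b a else 0) else (if p b then 0 else T a b)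

variable {p : ι → Prop} [DecidablePred p]

theorem isUnit_det_transposeDiagBlock [DecidableEq ι] {T : Matrix ι ι R}
    (hp : IsUnit (T.submatrix (Subtype.val : {a // p a} → ι) Subtype.val).det)
    (hnp : IsUnit (T.submatrix (Subtype.val : {a // ¬p a} → ι) Subtype.val).det) :
    IsUnit (transposeDiagBlock p T).det := by
  rw [twoBlockTriangular_det _ p fun a ha b hb => by simp [transposeDiagBlock, ha, hb]]
  have h₁ : toSquareBlockProp (transposeDiagBlock p T) p =
      (T.submatrix (Subtype.val : {a // p a} → ι) Subtype.val)ᵀ := by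
    ext a b; simp [toSquareBlockProp, transposeDiagBlock, a.2, b.2]
  have h₂ : toSquareBlockProp (transposeDiagBlock p T) (¬p ·) =
      T.submatrix (Subtype.val : {a // ¬p a} → ι) Subtype.val := by
    ext a b; simp [toSquareBlockProp, transposeDiagBlock, a.2, b.2]
  rw [h₁, h₂, det_transpose]
  exact hp.mul hnp

theorem exists_ite_dotProduct_mulVec_ite_eq (T : Matrix ι ι R) :
    ∃ f g : (ι → R) → R, ∀ i j,
      (fun k => if p k then j k else i k) ⬝ᵥ T *ᵥ (fun k => if p k then i k else j k) =
        f i + i ⬝ᵥ transposeDiagBlock p T *ᵥ j + g j := by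
  refine ⟨fun i => ∑ a, ∑ b, if ¬p a ∧ p b then i a * T a b * i b else 0,
    fun j => ∑ a, ∑ b, if p a ∧ ¬p b then j a * T a b * j b else 0, fun i j => ?_⟩
  have hQ : i ⬝ᵥ transposeDiagBlock p T *ᵥ j = ∑ a, ∑ b,
      ((if p a ∧ p b then j a * T a b * i b else 0) +
        (if ¬p a ∧ ¬p b then i a * T a b * j b else 0)) := by
    -- the `p`-block of `transposeDiagBlock p T` is transposed: swap the summation indices there
    simp only [Finset.sum_add_distrib]
    rw [Finset.sum_comm (f := fun a b => if p a ∧ p b then j a * T a b * i b else 0),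
      ← Finset.sum_add_distrib]
    simp only [dotProduct, mulVec, Finset.mul_sum, ← Finset.sum_add_distrib]
    refine Finset.sum_congr rfl fun a _ => Finset.sum_congr rfl fun b _ => ?_
    by_cases ha : p a <;> by_cases hb : p b <;>
      simp only [transposeDiagBlock, of_apply, ha, hb, ↓reduceIte, and_self, and_true, and_false,
        not_true_eq_false, not_false_eq_true, zero_mul, mul_zero, add_zero, zero_add] <;> ring
  rw [hQ]
  simp only [dotProduct, mulVec, Finset.mul_sum, ← Finset.sum_add_distrib]
  refine Finset.sum_congr rfl fun a _ => Finset.sum_congr rfl fun b _ => ?_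
  by_cases ha : p a <;> by_cases hb : p b <;>
    simp only [ha, hb, ↓reduceIte, and_self, and_true, and_false, not_true_eq_false,
      not_false_eq_true, add_zero, zero_add] <;> ring

end Matrix

namespace AddChar

variable {ι A M R K : Type*}

lemma map_sum_eq_prod [AddCommMonoid A] [CommMonoid M] (ψ : AddChar A M) (s : Finset ι)
    (f : ι → A) : ψ (∑ i ∈ s, f i) = ∏ i ∈ s, ψ (f i) :=
  map_prod ψ.toMonoidHom (fun i => Multiplicative.ofAdd (f i)) s

variable [CommRing R] [Field K] [Fintype ι]

def dftMatrix (ψ : AddChar R K) : Matrix (ι → R) (ι → R) K := of fun u v => ψ (u ⬝ᵥ v)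

variable [Fintype R] [DecidableEq R] [DecidableEq ι]

theorem sum_apply_dotProduct {ψ : AddChar R K} (hψ : ψ.IsPrimitive) (u : ι → R) :
    ∑ v : ι → R, ψ (u ⬝ᵥ v) = if u = 0 then (Fintype.card R : K) ^ Fintype.card ι else 0 := by
  simp only [dotProduct, map_sum_eq_prod, mul_comm (u _)]
  rw [← Fintype.prod_sum (fun i t => ψ (t * u i))]
  simp only [sum_mulShift _ hψ]
  split_ifs with hu
  · simp [hu]
  · obtain ⟨k, hk⟩ := Function.ne_iff.mp hu
    exact Finset.prod_eq_zero (Finset.mem_univ k) (by simp [show u k ≠ 0 from hk])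

theorem dftMatrix_mul_dftMatrix_inv {ψ : AddChar R K} (hψ : ψ.IsPrimitive) :
    dftMatrix (ι := ι) ψ * dftMatrix ψ⁻¹ = ((Fintype.card R : K) ^ Fintype.card ι) • 1 := by
  ext u u'
  have : ∀ v, ψ (u ⬝ᵥ v) * ψ⁻¹ (v ⬝ᵥ u') = ψ ((u - u') ⬝ᵥ v) := fun v => by
    rw [inv_apply, ← map_add_eq_mul, sub_dotProduct, dotProduct_comm v, sub_eq_add_neg]
  rw [Matrix.mul_apply]
  simp only [dftMatrix, of_apply, this, sum_apply_dotProduct hψ, sub_eq_zero,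
    Matrix.smul_apply, Matrix.one_apply, smul_eq_mul, mul_ite, mul_one, mul_zero]

theorem isUnit_dftMatrix [CharZero K] {ψ : AddChar R K} (hψ : ψ.IsPrimitive) :
    IsUnit (dftMatrix (ι := ι) ψ) := by
  have hc : (Fintype.card R : K) ^ Fintype.card ι ≠ 0 := by simp
  refine (isUnit_iff_isUnit_det _).mpr (isUnit_det_of_right_inverse
    (B := ((Fintype.card R : K) ^ Fintype.card ι)⁻¹ • dftMatrix ψ⁻¹) ?_)
  rw [Matrix.mul_smul, dftMatrix_mul_dftMatrix_inv hψ, smul_smul, inv_mul_cancel₀ hc, one_smul]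

theorem rank_of_dotProduct_mulVec [CharZero K] {ψ : AddChar R K} (hψ : ψ.IsPrimitive)
    {B : Matrix ι ι R} (hB : IsUnit B.det) :
    (of fun u v => ψ (u ⬝ᵥ B *ᵥ v)).rank = Fintype.card R ^ Fintype.card ι := by
  let e := (B.toLinearEquiv' (B.invertibleOfIsUnitDet hB)).toEquiv
  calc (of fun u v => ψ (u ⬝ᵥ B *ᵥ v)).rank
      = ((dftMatrix ψ).submatrix (Equiv.refl _) e).rank := rfl
    _ = _ := by rw [rank_submatrix, rank_of_isUnit _ (isUnit_dftMatrix hψ), Fintype.card_fun]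

theorem rank_of_eq_add_dotProduct_mulVec_add [CharZero K] {ψ : AddChar R K}
    (hψ : ψ.IsPrimitive) {B : Matrix ι ι R} (hB : IsUnit B.det) {Φ : (ι → R) → (ι → R) → R}
    {f g : (ι → R) → R} (hΦ : ∀ u v, Φ u v = f u + u ⬝ᵥ B *ᵥ v + g v) :
    (of fun u v => ψ (Φ u v)).rank = Fintype.card R ^ Fintype.card ι := by
  have hfactor : (of fun u v => ψ (Φ u v)) =
      diagonal (fun u => ψ (f u)) * (of fun u v => ψ (u ⬝ᵥ B *ᵥ v)) *
        diagonal (fun v => ψ (g v)) := by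
    ext u v
    simp [hΦ, map_add_eq_mul, diagonal_mul, mul_diagonal]
  rw [hfactor, rank_diagonal_mul_mul_diagonal (fun _ => ψ.val_isUnit _)
    (fun _ => ψ.val_isUnit _), rank_of_dotProduct_mulVec hψ hB]

theorem rank_of_ite_dotProduct_mulVec_ite [CharZero K] {ψ : AddChar R K} (hψ : ψ.IsPrimitive)
    (p : ι → Prop) [DecidablePred p] {T : Matrix ι ι R}
    (hp : IsUnit (T.submatrix (Subtype.val : {a // p a} → ι) Subtype.val).det)
    (hnp : IsUnit (T.submatrix (Subtype.val : {a // ¬p a} → ι) Subtype.val).det) :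
    (of fun i j : ι → R => ψ ((fun k => if p k then j k else i k) ⬝ᵥ
      T *ᵥ (fun k => if p k then i k else j k))).rank = Fintype.card R ^ Fintype.card ι := by
  obtain ⟨f, g, hfg⟩ := exists_ite_dotProduct_mulVec_ite_eq (p := p) T
  exact rank_of_eq_add_dotProduct_mulVec_add hψ (isUnit_det_transposeDiagBlock hp hnp) hfg

end AddChar

theorem ZMod.finEquiv_apply {n : ℕ} [NeZero n] (t : Fin n) :
    ZMod.finEquiv n t = ((t : ℕ) : ZMod n) := by
  obtain ⟨k, rfl⟩ := Nat.exists_eq_succ_of_ne_zero (NeZero.ne n)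
  exact (Fin.cast_val_eq_self t).symm

theorem omg_pow_val {n : ℕ} [NeZero n] (z : ZMod n) : omg n ^ z.val = ZMod.stdAddChar z := by
  rw [ZMod.stdAddChar_apply, ZMod.toCircle_apply, omg, ← Complex.exp_nat_mul]
  ring_nf

theorem ptrans_WT_eq_submatrix {n d : ℕ} [NeZero n] (T : Matrix (Fin d) (Fin d) (ZMod n))
    (κ : Finset (Fin d)) :
    ptrans κ (WT n d T) =
      (of fun i j : Fin d → ZMod n => ZMod.stdAddChar ((fun k => if k ∈ κ then j k else i k) ⬝ᵥ
        T *ᵥ (fun k => if k ∈ κ then i k else j k))).submatrix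
        (Equiv.piCongrRight fun _ => (ZMod.finEquiv n).toEquiv)
        (Equiv.piCongrRight fun _ => (ZMod.finEquiv n).toEquiv) := by
  ext i j
  simp only [ptrans, WT, submatrix_apply, of_apply, ← omg_pow_val]
  congr 2
  simp only [dotProduct, mulVec, Finset.mul_sum, Equiv.piCongrRight_apply,
    RingEquiv.toEquiv_eq_coe, EquivLike.coe_coe, Pi.map_apply, ZMod.finEquiv_apply]
  refine Finset.sum_congr rfl fun a _ => Finset.sum_congr rfl fun b _ => ?_
  split_ifs <;> ring

theorem stmt17_general (n d : ℕ) (hp : n.Prime)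
    (T : Matrix (Fin d) (Fin d) (ZMod n))
    (hT : ∀ (s : ℕ) (r c : Fin s → Fin d), Function.Injective r → Function.Injective c →
      IsUnit (T.submatrix r c).det)
    (κ : Finset (Fin d)) :
    (ptrans κ (WT n d T)).rank = n ^ d := by
  have : NeZero n := ⟨hp.ne_zero⟩
  have hprincipal (p : Fin d → Prop) [DecidablePred p] :
      IsUnit (T.submatrix (Subtype.val : {a // p a} → Fin d) Subtype.val).det := by
    let e := Fintype.equivFin {a // p a}
    have hinj : Function.Injective (Subtype.val ∘ e.symm) :=
      Subtype.val_injective.comp e.symm.injective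
    simpa [← submatrix_submatrix, det_submatrix_equiv_self] using hT _ _ _ hinj hinj
  rw [ptrans_WT_eq_submatrix, rank_submatrix, AddChar.rank_of_ite_dotProduct_mulVec_ite
    (ZMod.isPrimitive_stdAddChar n) _ (hprincipal _) (hprincipal _), ZMod.card, Fintype.card_fin]

/-- For a prime `n`, `d` even with `n > 2d`, and `T` a `d × d` Cauchy matrix over `F_n`
(every square submatrix invertible), every partial transpose `W_T^{⊤_κ}` has full rank
`n^d`. -/
theorem stmt17 (n d : ℕ) (hp : n.Prime) (hde : Even d) (hnd : 2 * d < n)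
    (T : Matrix (Fin d) (Fin d) (ZMod n))
    (hT : ∀ (s : ℕ) (r c : Fin s → Fin d), Function.Injective r → Function.Injective c →
      IsUnit (T.submatrix r c).det)
    (κ : Finset (Fin d)) :
    (ptrans κ (WT n d T)).rank = n ^ d :=
  stmt17_general n d hp T hT κ
end

section
/- Let n be a prime, ω = e^{2πi/n}, d ≥ 1, and let T_2 be the d × d cyclic permutation matrix over F_n with (T_2)_{a,b} = 1[a + 1 ≡ b mod d]. Then for κ = {1, 3, 5, …, d−1} (d even), the partial transpose of W_{T_2} with respect to κ has rank 1, where (W_{T_2})_{(i_1,…,i_d),(j_1,…,j_d)} = ω^{∑_{k=1}^d i_k j_{(k mod d) + 1}}. Consequently, PT-rank(W_{T_2}) = 1. -/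
/-!
Split the exponent `∑ₖ i'ₖ j'ₖ₊₁` of an entry of the partial transpose according to the parity of
`k`. Since `d` is even, `k` and `k + 1` have opposite parities (also at the wrap-around), so for
even `k` both factors come from the column index and for odd `k` both come from the row index.
As `ω ^ n = 1`, the entry is then a product `u i * v j`: the partial transpose is an outer
product of two vectors with no zero entries, hence of rank one, and `W_{T_2}` is PT-basic.
-/

open Matrix BigOperators

/-- The matrix `W_{T_2}` for the cyclic permutation matrix `T_2`:
`(W_{T_2})_{i⃗,j⃗} = ω^{∑_k i_k j_{(k mod d)+1}}` (cyclic successor of indices). -/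
noncomputable def Wcyc (n d : ℕ) [NeZero d] : Matrix (Fin d → Fin n) (Fin d → Fin n) ℂ :=
  fun i j => omg n ^ (∑ k : Fin d, ((i k : ℕ) : ZMod n) * ((j (k + 1) : ℕ) : ZMod n)).val

theorem Matrix.rank_pos_of_ne_zero {K m n : Type*} [Field K] [Fintype n] [DecidableEq n]
    {M : Matrix m n K} (h : M ≠ 0) : 0 < M.rank := by
  rwa [Matrix.rank, Module.finrank_pos_iff, Submodule.nontrivial_iff_ne_bot, Ne,
    LinearMap.range_eq_bot, ← Matrix.toLin'_apply', LinearEquiv.map_eq_zero_iff]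

theorem Matrix.rank_vecMulVec_eq_one {K m n : Type*} [Field K] [Fintype n] [DecidableEq n]
    {u : m → K} {v : n → K} (hu : u ≠ 0) (hv : v ≠ 0) : (vecMulVec u v).rank = 1 :=
  le_antisymm (rank_vecMulVec_le u v) <| rank_pos_of_ne_zero fun h => by
    obtain ⟨i, hi⟩ := Function.ne_iff.mp hu
    obtain ⟨j, hj⟩ := Function.ne_iff.mp hv
    exact mul_ne_zero hi hj congr($h i j)

theorem pow_zmod_val_add {M : Type*} [Monoid M] {n : ℕ} [NeZero n] {ζ : M} (hζ : ζ ^ n = 1)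
    (x y : ZMod n) : ζ ^ (x + y).val = ζ ^ x.val * ζ ^ y.val := by
  rw [ZMod.val_add, ← pow_eq_pow_mod _ hζ, pow_add]

theorem Fin.val_add_one_mod_two_of_even {d : ℕ} [NeZero d] (hd : Even d) (k : Fin d) :
    ((k + 1 : Fin d) : ℕ) % 2 = ((k : ℕ) + 1) % 2 := by
  rw [Fin.val_add, Fin.val_one', Nat.add_mod_mod, Nat.mod_mod_of_dvd _ hd.two_dvd]

theorem PTrank_eq_one_of_isPTBasic {F : Type*} [Field F] {n d : ℕ}
    {M : Matrix (Fin d → Fin n) (Fin d → Fin n) F} (hM : IsPTBasic M) : PTrank M = 1 := by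
  obtain ⟨κ, hκ⟩ := hM
  have hM0 : M ≠ 0 := by
    rintro rfl
    exact zero_ne_one (rank_zero.symm.trans hκ)
  have hmem : 1 ∈ { r | ∃ P : Fin r → Matrix (Fin d → Fin n) (Fin d → Fin n) F,
      (∀ i, IsPTBasic (P i)) ∧ M = ∑ i, P i } :=
    ⟨fun _ => M, fun _ => ⟨κ, hκ⟩, by simp⟩
  rw [PTrank]
  refine le_antisymm (Nat.sInf_le hmem) (Nat.one_le_iff_ne_zero.mpr fun h0 => hM0 ?_)
  obtain ⟨P, -, hP⟩ := h0 ▸ Nat.sInf_mem ⟨1, hmem⟩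
  simpa using hP

theorem omg_pow_self {n : ℕ} (hn : n ≠ 0) : omg n ^ n = 1 :=
  (Complex.isPrimitiveRoot_exp n hn).pow_eq_one

theorem omg_ne_zero (n : ℕ) : omg n ≠ 0 :=
  Complex.exp_ne_zero _

def evenIndices (d : ℕ) : Finset (Fin d) :=
  Finset.univ.filter fun k : Fin d => (k : ℕ) % 2 = 0

theorem add_one_mem_evenIndices_iff {d : ℕ} [NeZero d] (hd : Even d) (k : Fin d) :
    k + 1 ∈ evenIndices d ↔ k ∉ evenIndices d := by
  simp only [evenIndices, Finset.mem_filter, Finset.mem_univ, true_and,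
    Fin.val_add_one_mod_two_of_even hd]
  omega

def cyclicPairSum {n d : ℕ} [NeZero d] (s : Finset (Fin d)) (i : Fin d → Fin n) : ZMod n :=
  ∑ k ∈ s, ((i k : ℕ) : ZMod n) * ((i (k + 1) : ℕ) : ZMod n)

theorem ptrans_Wcyc_eq_vecMulVec {n d : ℕ} [NeZero n] [NeZero d] (hd : Even d) :
    ptrans (evenIndices d) (Wcyc n d) =
      vecMulVec (fun i => omg n ^ (cyclicPairSum (evenIndices d)ᶜ i).val)
        (fun j => omg n ^ (cyclicPairSum (evenIndices d) j).val) := by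
  ext i j
  rw [vecMulVec_apply, ptrans, Wcyc, ← Finset.sum_add_sum_compl (evenIndices d),
    pow_zmod_val_add (omg_pow_self (NeZero.ne n)), mul_comm, cyclicPairSum, cyclicPairSum]
  congr 3 <;> refine Finset.sum_congr rfl fun k hk => ?_
  · have hk' : k ∉ evenIndices d := Finset.mem_compl.mp hk
    rw [if_neg hk', if_pos ((add_one_mem_evenIndices_iff hd k).mpr hk')]
  · rw [if_pos hk, if_neg (by simpa [add_one_mem_evenIndices_iff hd] using hk)]

theorem stmt19_general (n d : ℕ) [NeZero d] (hp : n.Prime) (hde : Even d) :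
    (ptrans (Finset.univ.filter fun k : Fin d => (k : ℕ) % 2 = 0) (Wcyc n d)).rank = 1 ∧
    PTrank (Wcyc n d) = 1 := by
  have : NeZero n := ⟨hp.ne_zero⟩
  have hrank : (ptrans (evenIndices d) (Wcyc n d)).rank = 1 := by
    rw [ptrans_Wcyc_eq_vecMulVec hde]
    exact rank_vecMulVec_eq_one (fun h => pow_ne_zero _ (omg_ne_zero n) (congrFun h 0))
      (fun h => pow_ne_zero _ (omg_ne_zero n) (congrFun h 0))
  exact ⟨hrank, PTrank_eq_one_of_isPTBasic ⟨_, hrank⟩⟩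

/-- For `n` prime and `d ≥ 1` even, the partial transpose of `W_{T_2}` with respect to
`κ = {1, 3, 5, …, d−1}` (1-indexed; i.e. the even 0-indexed positions) has rank `1`, and
consequently `PT-rank(W_{T_2}) = 1`. -/
theorem stmt19 (n d : ℕ) [NeZero d] (hp : n.Prime) (hd : 1 ≤ d) (hde : Even d) :
    (ptrans (Finset.univ.filter fun k : Fin d => (k : ℕ) % 2 = 0) (Wcyc n d)).rank = 1 ∧
    PTrank (Wcyc n d) = 1 :=
  stmt19_general n d hp hde
end
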